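/- arXiv:1605.07607 — 5 statements merged into one kernel-verified Lean document; each statement's English description precedes it below -/
import Mathlib

section
/- Let E₁,…,E_m be r-subsets of [n] with |E_i ∩ E_j| = 1 for all i < j, all pairwise intersection points distinct, and let v ∈ [n] with v ∉ E_j for all j. Then by inclusion–exclusion, the number of r-subsets E of [n] with v ∈ E and E ∩ E_j ≠ ∅ for every j ∈ [m] equals ∑_{i=0}^{m} (−1)^i C(m, i) C(n − 1 − ri + i(i−1)/2, r − 1). -/
lemma count_aux (n r : ℕ) (hr : 0 < r) (v : Fin n) (W : Finset (Fin n)) (hvW : v ∉ W) :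
    (Finset.univ.filter (fun A : Finset (Fin n) => A.card = r ∧ v ∈ A ∧ Disjoint A W)).card
      = (n - 1 - W.card).choose (r - 1) := by
  classical
  have hcard : (((Finset.univ : Finset (Fin n)) \ W).erase v).card = n - 1 - W.card := by
    have hv' : v ∈ (Finset.univ : Finset (Fin n)) \ W := by simp [hvW]
    rw [Finset.card_erase_of_mem hv', Finset.card_sdiff_of_subset (Finset.subset_univ W)]
    simp [Finset.card_univ]
    omega
  rw [← hcard, ← Finset.card_powersetCard (r - 1) _]
  refine Finset.card_bij' (fun A _ => A.erase v) (fun B _ => insert v B) ?_ ?_ ?_ ?_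
  · intro A hA
    simp only [Finset.mem_filter, Finset.mem_univ, true_and] at hA
    obtain ⟨hAr, hvA, hdisj⟩ := hA
    rw [Finset.mem_powersetCard]
    constructor
    · intro x hx
      rw [Finset.mem_erase] at hx
      exact Finset.mem_erase.2 ⟨hx.1, by simp [Finset.disjoint_left.1 hdisj hx.2]⟩
    · rw [Finset.card_erase_of_mem hvA, hAr]
  · intro B hB
    rw [Finset.mem_powersetCard] at hB
    obtain ⟨hBsub, hBc⟩ := hB
    have hvB : v ∉ B := fun h => (Finset.mem_erase.1 (hBsub h)).1 rfl
    simp only [Finset.mem_filter, Finset.mem_univ, true_and]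
    refine ⟨?_, Finset.mem_insert_self _ _, ?_⟩
    · rw [Finset.card_insert_of_notMem hvB, hBc]; omega
    · rw [Finset.disjoint_left]
      intro x hx
      rcases Finset.mem_insert.1 hx with h | h
      · subst h; exact hvW
      · have := Finset.mem_erase.1 (hBsub h)
        simpa using (Finset.mem_sdiff.1 this.2).2
  · intro A hA
    simp only [Finset.mem_filter] at hA
    exact Finset.insert_erase hA.2.2.1
  · intro B hB
    rw [Finset.mem_powersetCard] at hB
    have hvB : v ∉ B := fun h => (Finset.mem_erase.1 (hB.1 h)).1 rfl
    exact Finset.erase_insert hvB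

/-- Inclusion-exclusion count of r-sets containing `v` and meeting every edge of a
simple intersecting family with distinct intersection points, `v` in no edge. -/
theorem stmt_2 (n r m : ℕ) (hr : 0 < r) (hrn : r < n)
    (E : Fin m → Finset (Fin n))
    (hcard : ∀ j, (E j).card = r)
    (hint : ∀ j k : Fin m, j < k → (E j ∩ E k).card = 1)
    (hdist : ∀ j k l p : Fin m, j < k → l < p → (j, k) ≠ (l, p) →
      E j ∩ E k ≠ E l ∩ E p)
    (v : Fin n) (hv : ∀ j, v ∉ E j) :
    ({A : Finset (Fin n) | A.card = r ∧ v ∈ A ∧ ∀ j, (A ∩ E j).Nonempty}.ncard : ℤ)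
      = ∑ i ∈ Finset.range (m + 1), (-1 : ℤ) ^ i * (m.choose i : ℤ) *
          ((n - 1 - (r * i - i * (i - 1) / 2)).choose (r - 1) : ℤ) := by
  classical
  -- unordered versions of the hypotheses
  have key : ∀ j k l p : Fin m, j ≠ k → l ≠ p → (j ≠ l ∨ k ≠ p) → (j ≠ p ∨ k ≠ l) →
      E j ∩ E k ≠ E l ∩ E p := by
    intro j k l p hjk hlp h1 h2
    rcases hjk.lt_or_gt with h | h <;> rcases hlp.lt_or_gt with h' | h'
    · exact hdist j k l p h h' (by simp only [ne_eq, Prod.mk.injEq, not_and]; tauto)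
    · rw [Finset.inter_comm (E l)]
      exact hdist j k p l h h' (by simp only [ne_eq, Prod.mk.injEq, not_and]; tauto)
    · rw [Finset.inter_comm (E j)]
      exact hdist k j l p h h' (by simp only [ne_eq, Prod.mk.injEq, not_and]; tauto)
    · rw [Finset.inter_comm (E j), Finset.inter_comm (E l)]
      exact hdist k j p l h h' (by simp only [ne_eq, Prod.mk.injEq, not_and]; tauto)
  have hint' : ∀ j k : Fin m, j ≠ k → (E j ∩ E k).card = 1 := by
    intro j k h
    rcases h.lt_or_gt with h | h
    · exact hint j k h
    · rw [Finset.inter_comm]; exact hint k j h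
  -- cardinality of unions
  have hU : ∀ T : Finset (Fin m), (T.biUnion E).card + (T.card).choose 2 = r * T.card := by
    intro T
    induction T using Finset.induction_on with
    | empty => simp
    | @insert a s ha ih =>
      have hane : ∀ k ∈ s, a ≠ k := fun k hk h => ha (h ▸ hk)
      have hsub : E a ∩ s.biUnion E = s.biUnion (fun k => E a ∩ E k) :=
        Finset.inter_biUnion _ _ _
      have hdisj : ∀ k ∈ s, ∀ k' ∈ s, k ≠ k' → Disjoint (E a ∩ E k) (E a ∩ E k') := by
        intro k hk k' hk' hne
        obtain ⟨x, hx⟩ := Finset.card_eq_one.1 (hint' a k (hane k hk))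
        obtain ⟨y, hy⟩ := Finset.card_eq_one.1 (hint' a k' (hane k' hk'))
        have hne2 : E a ∩ E k ≠ E a ∩ E k' :=
          key a k a k' (hane k hk) (hane k' hk') (Or.inr hne) (Or.inl (hane k' hk'))
        have hxy : x ≠ y := by
          intro h
          exact hne2 (by rw [hx, hy, h])
        rw [hx, hy]
        exact Finset.disjoint_singleton.2 hxy
      have h2 : (E a ∩ s.biUnion E).card = s.card := by
        rw [hsub, Finset.card_biUnion hdisj,
          Finset.sum_congr rfl (fun k hk => hint' a k (hane k hk))]
        simp
      have h3 := Finset.card_union_add_card_inter (E a) (s.biUnion E)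
      rw [h2, hcard a] at h3
      rw [Finset.biUnion_insert, Finset.card_insert_of_notMem ha]
      have hch : (s.card + 1).choose 2 = s.card.choose 2 + s.card := by
        rw [Nat.choose_succ_succ, Nat.choose_one_right]
        norm_num [Nat.add_comm]
      have hm : r * (s.card + 1) = r * s.card + r := by ring
      rw [hm, hch]
      omega
  have hUcard : ∀ T : Finset (Fin m),
      (T.biUnion E).card = r * T.card - T.card * (T.card - 1) / 2 := by
    intro T
    have h := hU T
    rw [Nat.choose_two_right] at h
    omega
  -- convert ncard to Finset card
  have hset : {A : Finset (Fin n) | A.card = r ∧ v ∈ A ∧ ∀ j, (A ∩ E j).Nonempty}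
      = ↑(Finset.univ.filter
          (fun A : Finset (Fin n) => A.card = r ∧ v ∈ A ∧ ∀ j, (A ∩ E j).Nonempty)) := by
    ext A; simp
  rw [hset, Set.ncard_coe_finset]
  set B := Finset.univ.filter (fun A : Finset (Fin n) => A.card = r ∧ v ∈ A) with hB
  set Miss : Finset (Fin n) → Finset (Fin m) :=
    fun A => Finset.univ.filter (fun j => A ∩ E j = ∅) with hMiss
  have hmiss_empty : ∀ A : Finset (Fin n), Miss A = ∅ ↔ ∀ j, (A ∩ E j).Nonempty := by
    intro A
    rw [hMiss]
    simp only [Finset.filter_eq_empty_iff, Finset.mem_univ, true_implies]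
    simp [Finset.nonempty_iff_ne_empty]
  have hfilter : Finset.univ.filter
      (fun A : Finset (Fin n) => A.card = r ∧ v ∈ A ∧ ∀ j, (A ∩ E j).Nonempty)
      = B.filter (fun A => Miss A = ∅) := by
    ext A
    simp only [hB, Finset.mem_filter, Finset.mem_univ, true_and, hmiss_empty A, and_assoc]
  rw [hfilter]
  have subMiss : ∀ (A : Finset (Fin n)) (T : Finset (Fin m)),
      T ⊆ Miss A ↔ Disjoint A (T.biUnion E) := by
    intro A T
    rw [Finset.disjoint_biUnion_right]
    constructor
    · intro h j hj
      rw [Finset.disjoint_iff_inter_eq_empty]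
      exact (Finset.mem_filter.1 (h hj)).2
    · intro h j hj
      exact Finset.mem_filter.2 ⟨Finset.mem_univ _,
        Finset.disjoint_iff_inter_eq_empty.1 (h j hj)⟩
  have gcount : ∀ T : Finset (Fin m), (B.filter (fun A => T ⊆ Miss A)).card
      = (n - 1 - (T.biUnion E).card).choose (r - 1) := by
    intro T
    have hvT : v ∉ T.biUnion E := by
      intro h
      obtain ⟨j, -, hj⟩ := Finset.mem_biUnion.1 h
      exact hv j hj
    rw [← count_aux n r hr v (T.biUnion E) hvT]
    congr 1
    ext A
    simp only [hB, Finset.mem_filter, Finset.mem_univ, true_and, subMiss, and_assoc]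
  -- inclusion-exclusion
  have step1 : ((B.filter (fun A => Miss A = ∅)).card : ℤ)
      = ∑ A ∈ B, ∑ T ∈ (Miss A).powerset, (-1 : ℤ) ^ T.card := by
    rw [← Finset.sum_boole]
    exact Finset.sum_congr rfl fun A _ => Finset.sum_powerset_neg_one_pow_card.symm
  have step2 : ∀ A : Finset (Fin n), ∑ T ∈ (Miss A).powerset, (-1 : ℤ) ^ T.card
      = ∑ T ∈ (Finset.univ : Finset (Fin m)).powerset,
          if T ⊆ Miss A then (-1 : ℤ) ^ T.card else 0 := by
    intro A
    rw [show (Miss A).powerset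
        = (Finset.univ : Finset (Fin m)).powerset.filter (· ⊆ Miss A) by
      ext T; simp [Finset.mem_powerset], Finset.sum_filter]
  have step5 : ∀ (T : Finset (Fin m)),
      ∑ A ∈ B, (if T ⊆ Miss A then (-1 : ℤ) ^ T.card else 0)
      = ((B.filter (fun A => T ⊆ Miss A)).card : ℤ) * (-1) ^ T.card := by
    intro T
    rw [Finset.sum_ite, Finset.sum_const, Finset.sum_const_zero, add_zero, nsmul_eq_mul]
  rw [step1, Finset.sum_congr rfl (fun A _ => step2 A), Finset.sum_comm,
    Finset.sum_congr rfl (fun T _ => step5 T),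
    Finset.sum_congr rfl (fun T _ => by rw [gcount T, hUcard T])]
  rw [Finset.sum_powerset_apply_card
    (fun i => ((n - 1 - (r * i - i * (i - 1) / 2)).choose (r - 1) : ℤ) * (-1) ^ i)]
  rw [Finset.card_univ, Fintype.card_fin]
  refine Finset.sum_congr rfl fun i _ => ?_
  rw [nsmul_eq_mul]
  push_cast
  ring
end

section
/- Let u ≥ ℓ ≥ 1 and h ≥ 1 be integers. The number of subsets H of the grid [u] × [ℓ] with |H| = h such that every row index in [u] and every column index in [ℓ] appears in some pair of H is at most ℓ^u · C(uℓ, h − ℓ). -/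
/-- If `u ≥ ℓ ≥ 1`, the number of `h`-subsets of the grid `[u] × [ℓ]` with both
projections surjective is at most `ℓ^u · C(uℓ, h-ℓ)`. -/
theorem stmt_9 (u ℓ h : ℕ) (hl : 1 ≤ ℓ) (hul : ℓ ≤ u) (hh : 1 ≤ h) :
    {H : Finset (Fin u × Fin ℓ) | H.card = h ∧ (∀ i : Fin u, ∃ j, (i, j) ∈ H) ∧
        ∀ j : Fin ℓ, ∃ i, (i, j) ∈ H}.ncard
      ≤ ℓ ^ u * (u * ℓ).choose (h - ℓ) := by
  classical
  set s : Set (Finset (Fin u × Fin ℓ)) :=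
    {H : Finset (Fin u × Fin ℓ) | H.card = h ∧ (∀ i : Fin u, ∃ j, (i, j) ∈ H) ∧
        ∀ j : Fin ℓ, ∃ i, (i, j) ∈ H} with hs
  have hfin : s.Finite := Set.toFinite s
  -- witness function
  let f : Finset (Fin u × Fin ℓ) → Fin u → Fin ℓ := fun H i =>
    if hw : ∃ j, (i, j) ∈ H then hw.choose else ⟨0, hl⟩
  have hf : ∀ H ∈ s, ∀ i : Fin u, (i, f H i) ∈ H := by
    intro H hH i
    obtain ⟨-, hrow, -⟩ := hH
    have hw : ∃ j, (i, j) ∈ H := hrow i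
    simp only [f, dif_pos hw]
    exact hw.choose_spec
  -- the removed cells
  let T : Finset (Fin u × Fin ℓ) → Finset (Fin u × Fin ℓ) := fun H =>
    Finset.image (fun j : Fin ℓ => (Fin.castLE hul j, f H (Fin.castLE hul j))) Finset.univ
  have hTcard : ∀ H, (T H).card = ℓ := by
    intro H
    rw [Finset.card_image_of_injective _ ?_, Finset.card_univ, Fintype.card_fin]
    intro a b hab
    have := congrArg Prod.fst hab
    simpa using Fin.castLE_injective hul (by simpa using this)
  have hTsub : ∀ H ∈ s, T H ⊆ H := by
    intro H hH x hx
    simp only [T, Finset.mem_image] at hx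
    obtain ⟨j, -, rfl⟩ := hx
    exact hf H hH _
  -- the injection
  let Φ : Finset (Fin u × Fin ℓ) → (Fin u → Fin ℓ) × Finset (Fin u × Fin ℓ) :=
    fun H => (f H, H \ T H)
  -- target finset
  let Tgt : Finset ((Fin u → Fin ℓ) × Finset (Fin u × Fin ℓ)) :=
    Finset.univ ×ˢ (Finset.univ.filter fun A => A.card = h - ℓ)
  have hmaps : ∀ H ∈ hfin.toFinset, Φ H ∈ Tgt := by
    intro H hH
    rw [Set.Finite.mem_toFinset] at hH
    simp only [Tgt, Finset.mem_product, Finset.mem_filter, Finset.mem_univ, true_and, Φ]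
    rw [Finset.card_sdiff_of_subset (hTsub H hH), hTcard, hH.1]
  have hinj : Set.InjOn Φ hfin.toFinset := by
    intro H1 h1 H2 h2 heq
    have h1 : H1 ∈ s := hfin.mem_toFinset.mp h1
    have h2 : H2 ∈ s := hfin.mem_toFinset.mp h2
    simp only [Φ, Prod.mk.injEq] at heq
    obtain ⟨hfeq, hdeq⟩ := heq
    have hTeq : T H1 = T H2 := by simp only [T, hfeq]
    calc H1 = (H1 \ T H1) ∪ T H1 := (Finset.sdiff_union_of_subset (hTsub H1 h1)).symm
      _ = (H2 \ T H2) ∪ T H2 := by rw [hdeq, hTeq]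
      _ = H2 := Finset.sdiff_union_of_subset (hTsub H2 h2)
  have hcard := Finset.card_le_card_of_injOn Φ hmaps hinj
  rw [Set.ncard_eq_toFinset_card' s]
  have : s.toFinset = hfin.toFinset := by ext x; simp [s]
  rw [this]
  refine le_trans hcard ?_
  rw [Finset.card_product, Finset.card_univ, Fintype.card_fun, Fintype.card_fin,
    Fintype.card_fin]
  have : (Finset.univ.filter fun A : Finset (Fin u × Fin ℓ) => A.card = h - ℓ)
      = Finset.univ.powersetCard (h - ℓ) := by
    rw [Finset.powersetCard_eq_filter, Finset.powerset_univ]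
  rw [this, Finset.card_powersetCard, Finset.card_univ, Fintype.card_prod,
    Fintype.card_fin, Fintype.card_fin]
end

section
/- Fix positive integers s ≤ t ≤ r ≤ n with tr ≤ n. Let E₁,…,E_t be r-subsets of [n] that pairwise intersect in single distinct points, and let X be a set of f of the intersection points x_{i,j}, (i,j) ∈ F, whose set of involved indices is S with |S| = s. Then any r-subset E of [n] with E ∩ {x_{i,j} : i<j} = X and which meets each E_i for i ∉ S in exactly one non-intersection point has exactly r − (t − s) − f points outside ⋃_i E_i, and the number of such r-sets E equals (r − t + 1)^{t−s} · C(n − t(r−t+1) − C(t,2), r − t + s − f). -/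
open Finset

set_option maxHeartbeats 2000000 in
/-- The count `ν_G(t)` of r-sets containing exactly the intersection points
`x_{i,j}` for `(i,j) ∈ F`, meeting each edge `E_i`, `i ∉ S`, in exactly one
private point, and containing no other points of `⋃ E_i`, equals
`(r-t+1)^{t-s} C(n - t(r-t+1) - C(t,2), r-t+s-f)`; each such set has exactly
`r - (t-s) - f` points outside `⋃ E_i`. -/
theorem stmt_16 (n r t s f : ℕ) (hs : 0 < s) (hst : s ≤ t) (htr : t ≤ r) (hrn : r ≤ n)
    (htn : t * r ≤ n) (hf : f + (t - s) ≤ r)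
    (E : Fin t → Finset (Fin n))
    (hcard : ∀ i, (E i).card = r)
    (hint : ∀ i j : Fin t, i < j → (E i ∩ E j).card = 1)
    (hdist : ∀ i j k l : Fin t, i < j → k < l → (i, j) ≠ (k, l) →
      E i ∩ E j ≠ E k ∩ E l)
    (S : Finset (Fin t)) (hS : S.card = s)
    (F : Finset (Fin t × Fin t)) (hFcard : F.card = f)
    (hFS : ∀ p ∈ F, p.1 < p.2 ∧ p.1 ∈ S ∧ p.2 ∈ S)
    (hcover : ∀ i ∈ S, ∃ p ∈ F, p.1 = i ∨ p.2 = i) :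
    (∀ A : Finset (Fin n),
        (A.card = r ∧
          (∀ i j : Fin t, i < j → ((E i ∩ E j) ⊆ A ↔ (i, j) ∈ F)) ∧
          (∀ i, i ∉ S → (A ∩ E i).card = 1) ∧
          (∀ i ∈ S, ∀ v ∈ A ∩ E i, ∃ j, j ≠ i ∧ v ∈ E j)) →
        (A \ Finset.univ.biUnion E).card = r - (t - s) - f) ∧
      {A : Finset (Fin n) | A.card = r ∧
          (∀ i j : Fin t, i < j → ((E i ∩ E j) ⊆ A ↔ (i, j) ∈ F)) ∧
          (∀ i, i ∉ S → (A ∩ E i).card = 1) ∧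
          (∀ i ∈ S, ∀ v ∈ A ∩ E i, ∃ j, j ≠ i ∧ v ∈ E j)}.ncard
        = (r - t + 1) ^ (t - s) *
            (n - t * (r - t + 1) - t.choose 2).choose (r - t + s - f) := by
  classical
  have ht1 : 1 ≤ t := hs.trans_le hst
  -- symmetric versions of hypotheses
  have hint' : ∀ i j : Fin t, i ≠ j → (E i ∩ E j).card = 1 := by
    intro i j hij
    rcases hij.lt_or_gt with h | h
    · exact hint i j h
    · rw [inter_comm]; exact hint j i h
  have hsingle : ∀ (X : Finset (Fin n)) (v : Fin n), X.card = 1 → v ∈ X → X = {v} := by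
    intro X v h hv
    exact Finset.eq_singleton_iff_unique_mem.mpr
      ⟨hv, fun x hx => Finset.card_le_one.mp h.le x hx v hv⟩
  have pinj : ∀ a b c d : Fin t, a < b → c < d → E a ∩ E b = E c ∩ E d →
      a = c ∧ b = d := by
    intro a b c d hab hcd h
    by_contra hne
    exact hdist a b c d hab hcd (by simpa [Prod.ext_iff] using hne) h
  have pinj' : ∀ a b c d : Fin t, a ≠ b → c ≠ d → E a ∩ E b = E c ∩ E d →
      (a = c ∧ b = d) ∨ (a = d ∧ b = c) := by
    intro a b c d hab hcd h
    rcases hab.lt_or_gt with h1 | h1 <;> rcases hcd.lt_or_gt with h2 | h2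
    · exact Or.inl (pinj _ _ _ _ h1 h2 h)
    · rw [inter_comm (E c)] at h
      obtain ⟨x, y⟩ := pinj _ _ _ _ h1 h2 h
      exact Or.inr ⟨x, y⟩
    · rw [inter_comm (E a)] at h
      obtain ⟨x, y⟩ := pinj _ _ _ _ h1 h2 h
      exact Or.inr ⟨y, x⟩
    · rw [inter_comm (E a), inter_comm (E c)] at h
      obtain ⟨x, y⟩ := pinj _ _ _ _ h1 h2 h
      exact Or.inl ⟨y, x⟩
  have htrip : ∀ (v : Fin n) (i j k : Fin t), i ≠ j → i ≠ k → j ≠ k →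
      v ∈ E i → v ∈ E j → v ∈ E k → False := by
    intro v i j k hij hik hjk h1 h2 h3
    have e1 : E i ∩ E j = {v} := hsingle _ _ (hint' i j hij) (Finset.mem_inter.mpr ⟨h1, h2⟩)
    have e2 : E i ∩ E k = {v} := hsingle _ _ (hint' i k hik) (Finset.mem_inter.mpr ⟨h1, h3⟩)
    rcases pinj' i j i k hij hik (e1.trans e2.symm) with ⟨-, h⟩ | ⟨h, -⟩
    · exact hjk h
    · exact hik h
  have hdisjPairs : ∀ (a b c d : Fin t), a ≠ b → c ≠ d →
      ¬((a = c ∧ b = d) ∨ (a = d ∧ b = c)) → Disjoint (E a ∩ E b) (E c ∩ E d) := by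
    intro a b c d hab hcd hne
    rw [Finset.disjoint_left]
    intro v hv hv'
    exact hne (pinj' a b c d hab hcd
      ((hsingle _ v (hint' _ _ hab) hv).trans (hsingle _ v (hint' _ _ hcd) hv').symm))
  -- definitions
  set U : Finset (Fin n) := Finset.univ.biUnion E with hU
  set Priv : Fin t → Finset (Fin n) :=
    fun i => (E i).filter (fun v => ∀ j, j ≠ i → v ∉ E j) with hPriv
  set XF : Finset (Fin n) := F.biUnion (fun p => E p.1 ∩ E p.2) with hXF
  set Xall : Finset (Fin n) :=
    (Finset.univ.filter (fun p : Fin t × Fin t => p.1 < p.2)).biUnion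
      (fun p => E p.1 ∩ E p.2) with hXall
  have memU : ∀ v, v ∈ U ↔ ∃ i, v ∈ E i := by
    intro v; simp [hU]
  have memPriv : ∀ v i, v ∈ Priv i ↔ (v ∈ E i ∧ ∀ j, j ≠ i → v ∉ E j) := by
    intro v i; simp [hPriv]
  have memXF : ∀ v, v ∈ XF ↔ ∃ p ∈ F, v ∈ E p.1 ∧ v ∈ E p.2 := by
    intro v; simp [hXF]
  have memXall : ∀ v, v ∈ Xall ↔ ∃ p : Fin t × Fin t, p.1 < p.2 ∧ v ∈ E p.1 ∧ v ∈ E p.2 := by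
    intro v; simp [hXall]
  have hPrivSub : ∀ i, Priv i ⊆ E i := fun i => Finset.filter_subset _ _
  have hPrivDisj : ∀ i j, i ≠ j → ∀ v, v ∈ Priv i → v ∈ Priv j → False := by
    intro i j hij v hvi hvj
    exact ((memPriv v j).mp hvj).2 i hij ((memPriv v i).mp hvi).1
  have hPrivXall : ∀ i v, v ∈ Priv i → v ∈ Xall → False := by
    intro i v hv hx
    obtain ⟨p, hp, h1, h2⟩ := (memXall v).mp hx
    obtain ⟨-, hpr⟩ := (memPriv v i).mp hv
    rcases eq_or_ne p.1 i with rfl | hne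
    · exact hpr p.2 hp.ne' h2
    · exact hpr p.1 hne h1
  have hXFXall : XF ⊆ Xall := by
    intro v hv
    obtain ⟨p, hp, h1, h2⟩ := (memXF v).mp hv
    exact (memXall v).mpr ⟨p, (hFS p hp).1, h1, h2⟩
  have hXFU : XF ⊆ U := by
    intro v hv
    obtain ⟨p, hp, h1, h2⟩ := (memXF v).mp hv
    exact (memU v).mpr ⟨p.1, h1⟩
  -- cardinalities
  have cardPairs : (Finset.univ.filter (fun p : Fin t × Fin t => p.1 < p.2)).card
      = t.choose 2 := by
    rw [Finset.card_eq_sum_card_fiberwise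
      (f := Prod.snd) (t := Finset.univ) (fun x _ => Finset.mem_univ _)]
    have hfib : ∀ j : Fin t,
        ((Finset.univ.filter (fun p : Fin t × Fin t => p.1 < p.2)).filter
          (fun p => p.snd = j)).card = (j : ℕ) := by
      intro j
      have : (Finset.univ.filter (fun p : Fin t × Fin t => p.1 < p.2)).filter
          (fun p => p.snd = j) = (Finset.Iio j).image (fun i => (i, j)) := by
        ext ⟨a, b⟩
        simp only [Finset.mem_filter, Finset.mem_univ, true_and, Finset.mem_image,
          Finset.mem_Iio, Prod.mk.injEq]
        constructor
        · rintro ⟨h1, rfl⟩; exact ⟨a, h1, rfl, rfl⟩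
        · rintro ⟨x, hx, rfl, rfl⟩; exact ⟨hx, rfl⟩
      rw [this, Finset.card_image_of_injective _ (fun x y hxy => congrArg Prod.fst hxy), Fin.card_Iio]
    rw [Finset.sum_congr rfl (fun j _ => hfib j)]
    rw [Fin.sum_univ_eq_sum_range (fun i => i) t, Finset.sum_range_id, Nat.choose_two_right]
  have cardXall : Xall.card = t.choose 2 := by
    rw [hXall, Finset.card_biUnion]
    · rw [Finset.sum_congr rfl
        (fun p hp => hint' p.1 p.2 (Finset.mem_filter.mp hp).2.ne)]
      simpa using cardPairs
    · intro p hp q hq hpq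
      have hp' := (Finset.mem_filter.mp hp).2
      have hq' := (Finset.mem_filter.mp hq).2
      refine hdisjPairs _ _ _ _ hp'.ne hq'.ne ?_
      rintro (⟨h1, h2⟩ | ⟨h1, h2⟩)
      · exact hpq (Prod.ext h1 h2)
      · exact absurd (h1 ▸ h2 ▸ hp') (by rw [h1, h2] at hp'; exact fun _ => lt_asymm hp' hq')
  have cardXF : XF.card = f := by
    rw [hXF, Finset.card_biUnion]
    · rw [Finset.sum_congr rfl (fun p hp => hint' p.1 p.2 (hFS p hp).1.ne)]
      simp [hFcard]
    · intro p hp q hq hpq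
      have hp' := (hFS p hp).1
      have hq' := (hFS q hq).1
      refine hdisjPairs _ _ _ _ hp'.ne hq'.ne ?_
      rintro (⟨h1, h2⟩ | ⟨h1, h2⟩)
      · exact hpq (Prod.ext h1 h2)
      · rw [h1, h2] at hp'; exact lt_asymm hp' hq'
  have cardPriv : ∀ i, (Priv i).card = r - t + 1 := by
    intro i
    have hD : (E i).filter (fun v => ¬ ∀ j, j ≠ i → v ∉ E j)
        = (Finset.univ.erase i).biUnion (fun j => E i ∩ E j) := by
      ext v
      constructor
      · intro hv
        obtain ⟨h1, h2⟩ := Finset.mem_filter.mp hv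
        push_neg at h2
        obtain ⟨j, hj, hvj⟩ := h2
        exact Finset.mem_biUnion.mpr ⟨j, Finset.mem_erase.mpr ⟨hj, Finset.mem_univ j⟩,
          Finset.mem_inter.mpr ⟨h1, hvj⟩⟩
      · intro hv
        obtain ⟨j, hj, hvj⟩ := Finset.mem_biUnion.mp hv
        obtain ⟨h1, h2⟩ := Finset.mem_inter.mp hvj
        refine Finset.mem_filter.mpr ⟨h1, ?_⟩
        push_neg
        exact ⟨j, (Finset.mem_erase.mp hj).1, h2⟩
    have hDcard : ((Finset.univ.erase i).biUnion (fun j => E i ∩ E j)).card = t - 1 := by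
      rw [Finset.card_biUnion]
      · rw [Finset.sum_congr rfl
          (fun j hj => hint' i j (Ne.symm (Finset.mem_erase.mp hj).1))]
        simp [Finset.card_erase_of_mem]
      · intro a ha b hb hab
        have ha' := (Finset.mem_erase.mp ha).1
        have hb' := (Finset.mem_erase.mp hb).1
        refine hdisjPairs _ _ _ _ (Ne.symm ha') (Ne.symm hb') ?_
        rintro (⟨h1, h2⟩ | ⟨h1, h2⟩)
        · exact hab h2
        · exact hb' h1.symm
    have hsplit := Finset.card_filter_add_card_filter_not
      (s := E i) (p := fun v => ∀ j, j ≠ i → v ∉ E j)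
    rw [hD, hDcard, hcard i] at hsplit
    have : (Priv i).card + (t - 1) = r := hsplit
    omega
  have hUdecomp : U = Xall ∪ Finset.univ.biUnion Priv := by
    ext v
    simp only [Finset.mem_union, Finset.mem_biUnion, Finset.mem_univ, true_and]
    rw [memU]
    constructor
    · rintro ⟨i, hi⟩
      by_cases hpv : ∀ j, j ≠ i → v ∉ E j
      · exact Or.inr ⟨i, (memPriv v i).mpr ⟨hi, hpv⟩⟩
      · push_neg at hpv
        obtain ⟨j, hj, hvj⟩ := hpv
        left
        rcases hj.lt_or_gt with h | h
        · exact (memXall v).mpr ⟨(j, i), h, hvj, hi⟩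
        · exact (memXall v).mpr ⟨(i, j), h, hi, hvj⟩
    · rintro (hv | ⟨i, hi⟩)
      · obtain ⟨p, -, h1, -⟩ := (memXall v).mp hv
        exact ⟨p.1, h1⟩
      · exact ⟨i, hPrivSub i hi⟩
  have cardU : U.card = t.choose 2 + t * (r - t + 1) := by
    rw [hUdecomp, Finset.card_union_of_disjoint, cardXall, Finset.card_biUnion]
    · rw [Finset.sum_congr rfl (fun i _ => cardPriv i)]
      simp [mul_comm]
    · intro a _ b _ hab
      rw [Function.onFun, Finset.disjoint_left]
      intro v hv hv'
      exact hPrivDisj a b hab v hv hv'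
    · rw [Finset.disjoint_left]
      intro v hv hv'
      obtain ⟨i, -, hi⟩ := Finset.mem_biUnion.mp hv'
      exact hPrivXall i v hi hv
  have hScompl : (Sᶜ : Finset (Fin t)).card = t - s := by
    rw [Finset.card_compl, hS, Fintype.card_fin]
  -- key structure lemma for admissible sets
  have keyA : ∀ A : Finset (Fin n), A.card = r →
      (∀ i j : Fin t, i < j → ((E i ∩ E j) ⊆ A ↔ (i, j) ∈ F)) →
      (∀ i, i ∉ S → (A ∩ E i).card = 1) →
      (∀ i ∈ S, ∀ v ∈ A ∩ E i, ∃ j, j ≠ i ∧ v ∈ E j) →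
      (∀ i, i ∉ S → A ∩ E i ⊆ Priv i) ∧ XF ⊆ A ∧
        (A = (XF ∪ (Sᶜ : Finset (Fin t)).biUnion (fun i => A ∩ E i)) ∪ (A \ U)) ∧
        (A \ U).card = r - (t - s) - f := by
    intro A hA1 hA2 hA3 hA4
    have hcore : ∀ v ∈ A, ∀ i j : Fin t, i ≠ j → v ∈ E i → v ∈ E j →
        v ∈ XF ∧ i ∈ S := by
      intro v hv i j hij h1 h2
      have key : ∀ a b : Fin t, a < b → v ∈ E a → v ∈ E b → (a, b) ∈ F := by
        intro a b hab ha hb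
        have hsub : E a ∩ E b ⊆ A := by
          rw [hsingle _ v (hint a b hab) (Finset.mem_inter.mpr ⟨ha, hb⟩)]
          simpa using hv
        exact (hA2 a b hab).mp hsub
      rcases hij.lt_or_gt with h | h
      · have hF := key i j h h1 h2
        exact ⟨(memXF v).mpr ⟨(i, j), hF, h1, h2⟩, (hFS _ hF).2.1⟩
      · have hF := key j i h h2 h1
        exact ⟨(memXF v).mpr ⟨(j, i), hF, h2, h1⟩, (hFS _ hF).2.2⟩
    have hb : ∀ i, i ∉ S → A ∩ E i ⊆ Priv i := by
      intro i hiS v hv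
      obtain ⟨hvA, hvE⟩ := Finset.mem_inter.mp hv
      refine (memPriv v i).mpr ⟨hvE, fun j hj hvj => ?_⟩
      exact hiS (hcore v hvA i j (Ne.symm hj) hvE hvj).2
    have ha : ∀ i ∈ S, ∀ v ∈ A ∩ E i, v ∈ XF := by
      intro i hiS v hv
      obtain ⟨j, hj, hvj⟩ := hA4 i hiS v hv
      obtain ⟨hvA, hvE⟩ := Finset.mem_inter.mp hv
      exact (hcore v hvA i j (Ne.symm hj) hvE hvj).1
    have hc : XF ⊆ A := by
      intro v hv
      obtain ⟨p, hp, h1, h2⟩ := (memXF v).mp hv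
      exact (hA2 p.1 p.2 (hFS p hp).1).mpr hp
        (Finset.mem_inter.mpr ⟨h1, h2⟩)
    have hAU : A ∩ U = XF ∪ (Sᶜ : Finset (Fin t)).biUnion (fun i => A ∩ E i) := by
      ext v
      constructor
      · intro hv
        obtain ⟨hvA, hvU⟩ := Finset.mem_inter.mp hv
        obtain ⟨i, hvi⟩ := (memU v).mp hvU
        by_cases hiS : i ∈ S
        · exact Finset.mem_union_left _ (ha i hiS v (Finset.mem_inter.mpr ⟨hvA, hvi⟩))
        · exact Finset.mem_union_right _ (Finset.mem_biUnion.mpr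
            ⟨i, Finset.mem_compl.mpr hiS, Finset.mem_inter.mpr ⟨hvA, hvi⟩⟩)
      · intro hv
        rcases Finset.mem_union.mp hv with hv | hv
        · exact Finset.mem_inter.mpr ⟨hc hv, hXFU hv⟩
        · obtain ⟨i, -, hvi⟩ := Finset.mem_biUnion.mp hv
          obtain ⟨hvA, hvE⟩ := Finset.mem_inter.mp hvi
          exact Finset.mem_inter.mpr ⟨hvA, (memU v).mpr ⟨i, hvE⟩⟩
    have hdecomp : A = (XF ∪ (Sᶜ : Finset (Fin t)).biUnion (fun i => A ∩ E i)) ∪ (A \ U) := by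
      rw [← hAU]
      exact ((Finset.union_comm _ _).trans (Finset.sdiff_union_inter A U)).symm
    have hcardAU : (A ∩ U).card = f + (t - s) := by
      rw [hAU, Finset.card_union_of_disjoint, cardXF, Finset.card_biUnion]
      · rw [Finset.sum_congr rfl (fun i hi => hA3 i (Finset.mem_compl.mp hi))]
        simp [hScompl]
      · intro a ha' b hb' hab
        rw [Function.onFun, Finset.disjoint_left]
        intro v hv hv'
        exact hPrivDisj a b hab v (hb a (Finset.mem_compl.mp ha') hv)
          (hb b (Finset.mem_compl.mp hb') hv')
      · rw [Finset.disjoint_left]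
        intro v hv hv'
        obtain ⟨i, hi, hvi⟩ := Finset.mem_biUnion.mp hv'
        exact hPrivXall i v (hb i (Finset.mem_compl.mp hi) hvi) (hXFXall hv)
    have hcardOut : (A \ U).card = r - (t - s) - f := by
      have h1 := Finset.card_inter_add_card_sdiff A U
      rw [hcardAU, hA1] at h1
      omega
    exact ⟨hb, hc, hdecomp, hcardOut⟩
  -- construction lemma
  have keyB : ∀ (g : ∀ a ∈ (Sᶜ : Finset (Fin t)), Fin n) (B : Finset (Fin n)),
      (∀ i (hi : i ∈ (Sᶜ : Finset (Fin t))), g i hi ∈ Priv i) → B ⊆ Uᶜ →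
      B.card = r - t + s - f →
      ∀ A : Finset (Fin n),
        A = (XF ∪ (Sᶜ : Finset (Fin t)).attach.image (fun i => g i.1 i.2)) ∪ B →
      (A.card = r ∧
        (∀ i j : Fin t, i < j → ((E i ∩ E j) ⊆ A ↔ (i, j) ∈ F)) ∧
        (∀ i, i ∉ S → (A ∩ E i).card = 1) ∧
        (∀ i ∈ S, ∀ v ∈ A ∩ E i, ∃ j, j ≠ i ∧ v ∈ E j)) ∧
      (∀ i (hi : i ∈ (Sᶜ : Finset (Fin t))), A ∩ E i = {g i hi}) ∧ A \ U = B := by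
    intro g B hg hBU hBcard A hAdef
    have memA : ∀ v, v ∈ A ↔
        (v ∈ XF ∨ (∃ i, ∃ hi : i ∈ (Sᶜ : Finset (Fin t)), g i hi = v) ∨ v ∈ B) := by
      intro v
      subst hAdef
      simp only [Finset.mem_union, Finset.mem_image, Finset.mem_attach, true_and,
        Subtype.exists, or_assoc]
    have hBnotU : ∀ v ∈ B, v ∉ U := fun v hv => Finset.mem_compl.mp (hBU hv)
    have hXFE : ∀ i, i ∉ S → ∀ v ∈ XF, v ∉ E i := by
      intro i hiS v hv hvE
      obtain ⟨p, hp, h1, h2⟩ := (memXF v).mp hv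
      obtain ⟨hlt, hp1, hp2⟩ := hFS p hp
      exact htrip v i p.1 p.2 (fun h => hiS (h ▸ hp1)) (fun h => hiS (h ▸ hp2)) hlt.ne hvE h1 h2
    have hAE : ∀ i (hi : i ∈ (Sᶜ : Finset (Fin t))), A ∩ E i = {g i hi} := by
      intro i hi
      have hiS := Finset.mem_compl.mp hi
      ext v
      rw [Finset.mem_inter, memA, Finset.mem_singleton]
      constructor
      · rintro ⟨hv | hv | hv, hvE⟩
        · exact absurd hvE (hXFE i hiS v hv)
        · obtain ⟨k, hk, rfl⟩ := hv
          rcases eq_or_ne k i with rfl | hki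
          · rfl
          · exact absurd hvE (((memPriv _ k).mp (hg k hk)).2 i (Ne.symm hki))
        · exact absurd ((memU v).mpr ⟨i, hvE⟩) (hBnotU v hv)
      · rintro rfl
        exact ⟨Or.inr (Or.inl ⟨i, hi, rfl⟩), hPrivSub i (hg i hi)⟩
    have hcond3 : ∀ i, i ∉ S → (A ∩ E i).card = 1 := by
      intro i hiS
      rw [hAE i (Finset.mem_compl.mpr hiS)]
      exact Finset.card_singleton _
    have hcond4 : ∀ i ∈ S, ∀ v ∈ A ∩ E i, ∃ j, j ≠ i ∧ v ∈ E j := by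
      intro i hiS v hv
      obtain ⟨hvA, hvE⟩ := Finset.mem_inter.mp hv
      rcases (memA v).mp hvA with hv' | hv' | hv'
      · obtain ⟨p, hp, h1, h2⟩ := (memXF v).mp hv'
        obtain ⟨hlt, -, -⟩ := hFS p hp
        rcases eq_or_ne i p.1 with rfl | hne1
        · exact ⟨p.2, hlt.ne', h2⟩
        rcases eq_or_ne i p.2 with rfl | hne2
        · exact ⟨p.1, hlt.ne, h1⟩
        · exact (htrip v i p.1 p.2 hne1 hne2 hlt.ne hvE h1 h2).elim
      · obtain ⟨k, hk, rfl⟩ := hv'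
        have hkS := Finset.mem_compl.mp hk
        rcases eq_or_ne k i with rfl | hki
        · exact absurd hiS hkS
        · exact absurd hvE (((memPriv _ k).mp (hg k hk)).2 i (Ne.symm hki))
      · exact absurd ((memU v).mpr ⟨i, hvE⟩) (hBnotU v hv')
    have hcond2 : ∀ i j : Fin t, i < j → ((E i ∩ E j) ⊆ A ↔ (i, j) ∈ F) := by
      intro i j hij
      constructor
      · intro hsub
        obtain ⟨x, hx⟩ := Finset.card_eq_one.mp (hint i j hij)
        have hxmem : x ∈ E i ∩ E j := hx ▸ Finset.mem_singleton_self x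
        have hxA : x ∈ A := hsub hxmem
        obtain ⟨hxi, hxj⟩ := Finset.mem_inter.mp hxmem
        rcases (memA x).mp hxA with hv | hv | hv
        · obtain ⟨q, hq, h1, h2⟩ := (memXF x).mp hv
          have hq' := (hFS q hq).1
          have heq : E i ∩ E j = E q.1 ∩ E q.2 :=
            (hsingle _ x (hint i j hij) hxmem).trans
              (hsingle _ x (hint' q.1 q.2 hq'.ne) (Finset.mem_inter.mpr ⟨h1, h2⟩)).symm
          obtain ⟨e1, e2⟩ := pinj i j q.1 q.2 hij hq' heq
          rw [show (i, j) = q from Prod.ext e1 e2]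
          exact hq
        · obtain ⟨k, hk, rfl⟩ := hv
          have hpr := ((memPriv _ k).mp (hg k hk)).2
          rcases eq_or_ne k i with rfl | hki
          · exact absurd hxj (hpr j hij.ne')
          · exact absurd hxi (hpr i (Ne.symm hki))
        · exact absurd ((memU x).mpr ⟨i, hxi⟩) (hBnotU x hv)
      · intro hF v hv
        exact (memA v).mpr (Or.inl ((memXF v).mpr
          ⟨(i, j), hF, (Finset.mem_inter.mp hv).1, (Finset.mem_inter.mp hv).2⟩))
    have hIcard : ((Sᶜ : Finset (Fin t)).attach.image (fun i => g i.1 i.2)).card = t - s := by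
      rw [Finset.card_image_of_injective]
      · rw [Finset.card_attach, hScompl]
      · intro a b hab
        by_contra hne
        have hab' : g a.1 a.2 = g b.1 b.2 := hab
        refine hPrivDisj a.1 b.1 (fun h => hne (Subtype.ext h)) _ (hg a.1 a.2) ?_
        rw [hab']
        exact hg b.1 b.2
    have hcond1 : A.card = r := by
      have hdXI : Disjoint XF ((Sᶜ : Finset (Fin t)).attach.image (fun i => g i.1 i.2)) := by
        rw [Finset.disjoint_left]
        intro v hv hv'
        obtain ⟨k, -, hk⟩ := Finset.mem_image.mp hv'
        exact hPrivXall k.1 v (hk ▸ hg k.1 k.2) (hXFXall hv)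
      have hdB : Disjoint (XF ∪ (Sᶜ : Finset (Fin t)).attach.image (fun i => g i.1 i.2)) B := by
        rw [Finset.disjoint_left]
        intro v hv hv'
        rcases Finset.mem_union.mp hv with hv | hv
        · exact hBnotU v hv' (hXFU hv)
        · obtain ⟨k, -, hk⟩ := Finset.mem_image.mp hv
          exact hBnotU v hv' ((memU v).mpr ⟨k.1, hPrivSub k.1 (hk ▸ hg k.1 k.2)⟩)
      rw [hAdef, Finset.card_union_of_disjoint hdB, Finset.card_union_of_disjoint hdXI,
        cardXF, hIcard, hBcard]
      omega
    have hAsdiff : A \ U = B := by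
      ext v
      rw [Finset.mem_sdiff, memA]
      constructor
      · rintro ⟨hv | hv | hv, hvU⟩
        · exact absurd (hXFU hv) hvU
        · obtain ⟨k, hk, rfl⟩ := hv
          exact absurd ((memU _).mpr ⟨k, hPrivSub k (hg k hk)⟩) hvU
        · exact hv
      · intro hv
        exact ⟨Or.inr (Or.inr hv), hBnotU v hv⟩
    exact ⟨⟨hcond1, hcond2, hcond3, hcond4⟩, hAE, hAsdiff⟩
  constructor
  · rintro A ⟨h1, h2, h3, h4⟩
    exact (keyA A h1 h2 h3 h4).2.2.2
  · have hsetEq : {A : Finset (Fin n) | A.card = r ∧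
        (∀ i j : Fin t, i < j → ((E i ∩ E j) ⊆ A ↔ (i, j) ∈ F)) ∧
        (∀ i, i ∉ S → (A ∩ E i).card = 1) ∧
        (∀ i ∈ S, ∀ v ∈ A ∩ E i, ∃ j, j ≠ i ∧ v ∈ E j)}
        = ↑(Finset.univ.filter (fun A : Finset (Fin n) => A.card = r ∧
        (∀ i j : Fin t, i < j → ((E i ∩ E j) ⊆ A ↔ (i, j) ∈ F)) ∧
        (∀ i, i ∉ S → (A ∩ E i).card = 1) ∧
        (∀ i ∈ S, ∀ v ∈ A ∩ E i, ∃ j, j ≠ i ∧ v ∈ E j))) := by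
      ext A
      simp only [Set.mem_setOf_eq, Finset.coe_filter, Finset.mem_univ, true_and]
    rw [hsetEq, Set.ncard_coe_finset]
    have hbij : (Finset.univ.filter (fun A : Finset (Fin n) => A.card = r ∧
        (∀ i j : Fin t, i < j → ((E i ∩ E j) ⊆ A ↔ (i, j) ∈ F)) ∧
        (∀ i, i ∉ S → (A ∩ E i).card = 1) ∧
        (∀ i ∈ S, ∀ v ∈ A ∩ E i, ∃ j, j ≠ i ∧ v ∈ E j))).card
        = (((Sᶜ : Finset (Fin t)).pi (fun i => Priv i)) ×ˢ
            (Finset.powersetCard (r - t + s - f) (Uᶜ : Finset (Fin n)))).card := by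
      refine Finset.card_bij'
        (i := fun A hA => (fun i hi => (A ∩ E i).min' (Finset.card_pos.mp (by
          rw [(Finset.mem_filter.mp hA).2.2.2.1 i (Finset.mem_compl.mp hi)]
          norm_num)), A \ U))
        (j := fun p hp => (XF ∪ (Sᶜ : Finset (Fin t)).attach.image (fun i => p.1 i.1 i.2)) ∪ p.2)
        ?_ ?_ ?_ ?_
      · intro A hA
        obtain ⟨h1, h2, h3, h4⟩ := (Finset.mem_filter.mp hA).2
        obtain ⟨hb, -, -, hout⟩ := keyA A h1 h2 h3 h4
        rw [Finset.mem_product]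
        refine ⟨Finset.mem_pi.mpr fun i hi => ?_, Finset.mem_powersetCard.mpr ⟨?_, ?_⟩⟩
        · exact hb i (Finset.mem_compl.mp hi) (Finset.min'_mem _ (Finset.card_pos.mp (by
            rw [(Finset.mem_filter.mp hA).2.2.2.1 i (Finset.mem_compl.mp hi)]
            norm_num)))
        · exact fun v hv => Finset.mem_compl.mpr (Finset.mem_sdiff.mp hv).2
        · rw [hout]; omega
      · intro p hp
        rw [Finset.mem_product] at hp
        obtain ⟨hp1, hp2⟩ := hp
        rw [Finset.mem_pi] at hp1
        rw [Finset.mem_powersetCard] at hp2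
        obtain ⟨hconds, -, -⟩ := keyB p.1 p.2 hp1 hp2.1 hp2.2 _ rfl
        exact Finset.mem_filter.mpr ⟨Finset.mem_univ _, hconds⟩
      · intro A hA
        obtain ⟨h1, h2, h3, h4⟩ := (Finset.mem_filter.mp hA).2
        obtain ⟨hb, hc, hdec, -⟩ := keyA A h1 h2 h3 h4
        ext v
        simp only [Finset.mem_union, Finset.mem_image, Finset.mem_attach, true_and,
          Subtype.exists]
        constructor
        · rintro ((hv | ⟨i, hi, rfl⟩) | hv)
          · exact hc hv
          · exact (Finset.mem_inter.mp (Finset.min'_mem _ _)).1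
          · exact (Finset.mem_sdiff.mp hv).1
        · intro hv
          have hv' : v ∈ (XF ∪ (Sᶜ : Finset (Fin t)).biUnion (fun i => A ∩ E i)) ∪ (A \ U) :=
            hdec ▸ hv
          rcases Finset.mem_union.mp hv' with hv' | hv'
          · rcases Finset.mem_union.mp hv' with hv' | hv'
            · exact Or.inl (Or.inl hv')
            · obtain ⟨i, hi, hvi⟩ := Finset.mem_biUnion.mp hv'
              exact Or.inl (Or.inr ⟨i, hi, Finset.card_le_one.mp
                (h3 i (Finset.mem_compl.mp hi)).le _ (Finset.min'_mem _ _) v hvi⟩)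
          · exact Or.inr hv'
      · intro p hp
        rw [Finset.mem_product] at hp
        obtain ⟨hp1, hp2⟩ := hp
        rw [Finset.mem_pi] at hp1
        rw [Finset.mem_powersetCard] at hp2
        obtain ⟨-, hAE, hsd⟩ := keyB p.1 p.2 hp1 hp2.1 hp2.2 _ rfl
        refine Prod.ext ?_ ?_
        · funext i hi
          have hsing := hAE i hi
          beta_reduce
          generalize_proofs hq hpf
          have h1' := Finset.min'_mem _ (hpf i hi)
          exact Finset.mem_singleton.mp ((Finset.ext_iff.mp hsing _).mp h1')
        · exact hsd
    rw [hbij, Finset.card_product, Finset.card_pi, Finset.card_powersetCard]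
    have h1 : (∏ i ∈ (Sᶜ : Finset (Fin t)), (Priv i).card) = (r - t + 1) ^ (t - s) := by
      rw [Finset.prod_congr rfl (fun i _ => cardPriv i), Finset.prod_const, hScompl]
    have h2 : (Uᶜ : Finset (Fin n)).card = n - t * (r - t + 1) - t.choose 2 := by
      rw [Finset.card_compl, cardU, Fintype.card_fin, Nat.sub_sub,
        Nat.add_comm (t * (r - t + 1)) (t.choose 2)]
    rw [h1, h2]
end

section
/- For positive integers t, and positive reals x, y with t² x y² ≤ C for some constant C: ∑_{G} x^{f(G)} y^{s(G)}, summed over all nonempty graphs G on subsets of [t] with no isolated vertices that are NOT matchings, is at most 2 t⁴ x² y³ e^{t² x y² / 2} (assuming y ≥ 1 and t²x/2 ≤ t²xy²/2). -/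
/-- The sum of `x^f y^s` over all nonempty graphs on subsets of `[t]` (no
isolated vertices) that are not matchings is at most `2t⁴x²y³ e^{t²xy²/2}`,
when `0 < x`, `y ≥ 1` and `t²xy² ≤ 1`. -/
theorem stmt_18 (t : ℕ) (ht : 0 < t) (x y : ℝ) (hx : 0 < x) (hy : 1 ≤ y)
    (hxy : (t : ℝ) ^ 2 * x * y ^ 2 ≤ 1) :
    ∑ F ∈ Finset.univ.filter
        (fun F : Finset (Sym2 (Fin t)) => F.Nonempty ∧ (∀ e ∈ F, ¬ e.IsDiag) ∧
          ∃ e₁ ∈ F, ∃ e₂ ∈ F, e₁ ≠ e₂ ∧ ∃ v, v ∈ e₁ ∧ v ∈ e₂),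
        x ^ F.card * y ^ (Finset.univ.filter (fun v : Fin t => ∃ e ∈ F, v ∈ e)).card
      ≤ 2 * (t : ℝ) ^ 4 * x ^ 2 * y ^ 3 * Real.exp ((t : ℝ) ^ 2 * x * y ^ 2 / 2) := by
  classical
  have hy0 : (0:ℝ) < y := lt_of_lt_of_le one_pos hy
  set E : Finset (Sym2 (Fin t)) := Finset.univ.filter (fun e => ¬ e.IsDiag) with hE
  set N := E.card with hN
  -- each edge covers at most 2 vertices
  have hvert : ∀ e : Sym2 (Fin t), (Finset.univ.filter (fun v : Fin t => v ∈ e)).card ≤ 2 := by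
    intro e
    induction e using Sym2.ind with
    | _ a b =>
      have hsub : Finset.univ.filter (fun v : Fin t => v ∈ s(a,b)) ⊆ {a, b} := by
        intro w hw
        simp only [Finset.mem_filter, Finset.mem_univ, true_and, Sym2.mem_iff] at hw
        simp only [Finset.mem_insert, Finset.mem_singleton]
        tauto
      calc (Finset.univ.filter (fun v : Fin t => v ∈ s(a,b))).card
          ≤ ({a,b} : Finset (Fin t)).card := Finset.card_le_card hsub
        _ ≤ 2 := (Finset.card_insert_le _ _).trans (by simp)
  -- key combinatorial fact: non-matchings cover at most 2f-1 vertices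
  have key : ∀ F : Finset (Sym2 (Fin t)),
      (∃ e₁ ∈ F, ∃ e₂ ∈ F, e₁ ≠ e₂ ∧ ∃ v, v ∈ e₁ ∧ v ∈ e₂) →
      (Finset.univ.filter (fun v : Fin t => ∃ e ∈ F, v ∈ e)).card ≤ 2 * F.card - 1 ∧
        2 ≤ F.card := by
    rintro F ⟨e₁, he₁, e₂, he₂, hne, v, hv₁, hv₂⟩
    have hcard2 : 2 ≤ F.card := Finset.one_lt_card.mpr ⟨e₁, he₁, e₂, he₂, hne⟩
    refine ⟨?_, hcard2⟩
    have hsub : (Finset.univ.filter (fun v : Fin t => ∃ e ∈ F, v ∈ e)) ⊆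
        ((Finset.univ.filter (fun w : Fin t => w ∈ e₁)).erase v) ∪
          (F.erase e₁).biUnion (fun e => Finset.univ.filter (fun w : Fin t => w ∈ e)) := by
      intro w hw
      simp only [Finset.mem_filter, Finset.mem_univ, true_and] at hw
      obtain ⟨e, he, hwe⟩ := hw
      by_cases heq : e = e₁
      · subst heq
        by_cases hwv : w = v
        · subst hwv
          exact Finset.mem_union_right _ (Finset.mem_biUnion.mpr
            ⟨e₂, Finset.mem_erase.mpr ⟨fun h => hne h.symm, he₂⟩, by simp [hv₂]⟩)
        · exact Finset.mem_union_left _ (Finset.mem_erase.mpr ⟨hwv, by simp [hwe]⟩)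
      · exact Finset.mem_union_right _ (Finset.mem_biUnion.mpr
          ⟨e, Finset.mem_erase.mpr ⟨heq, he⟩, by simp [hwe]⟩)
    have h1 : ((Finset.univ.filter (fun w : Fin t => w ∈ e₁)).erase v).card ≤ 1 := by
      rw [Finset.card_erase_of_mem (by simp [hv₁])]
      have := hvert e₁
      omega
    have h2 : ((F.erase e₁).biUnion
        (fun e => Finset.univ.filter (fun w : Fin t => w ∈ e))).card ≤ 2 * (F.card - 1) := by
      calc ((F.erase e₁).biUnion (fun e => Finset.univ.filter (fun w : Fin t => w ∈ e))).card
          ≤ ∑ e ∈ F.erase e₁, (Finset.univ.filter (fun w : Fin t => w ∈ e)).card :=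
            Finset.card_biUnion_le
        _ ≤ (F.erase e₁).card * 2 := by
            rw [← smul_eq_mul]
            exact Finset.sum_le_card_nsmul _ _ 2 (fun e _ => hvert e)
        _ = 2 * (F.card - 1) := by rw [Finset.card_erase_of_mem he₁]; ring
    have := (Finset.card_le_card hsub).trans (Finset.card_union_le _ _)
    omega
  -- number of possible edges: 2N ≤ t²
  have hNle : 2 * N ≤ t ^ 2 := by
    have hcard : N = t.choose 2 := by
      have h1 : Fintype.card {a : Sym2 (Fin t) // ¬ a.IsDiag} = t.choose 2 := by
        rw [Sym2.card_subtype_not_diag, Fintype.card_fin]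
      rw [hN, hE, ← h1, Fintype.card_subtype]
    rw [hcard, Nat.choose_two_right]
    have h1 : t * (t - 1) / 2 * 2 ≤ t * (t - 1) := Nat.div_mul_le_self _ _
    have h2 : t * (t - 1) ≤ t ^ 2 := by nlinarith [Nat.sub_le t 1]
    omega
  have hNR : (2:ℝ) * N ≤ (t:ℝ) ^ 2 := by exact_mod_cast hNle
  -- the geometric ratio
  set r : ℝ := (N : ℝ) * x * y ^ 2 with hrdef
  have hr0 : 0 ≤ r := by positivity
  have hrhalf : r ≤ 1 / 2 := by
    have h := mul_le_mul_of_nonneg_right hNR (show (0:ℝ) ≤ x * y ^ 2 by positivity)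
    nlinarith [h]
  have hty : (0:ℝ) ≤ (t:ℝ) ^ 4 * x ^ 2 * y ^ 3 := by positivity
  -- pointwise bound then enlarge index set
  have hAS : (Finset.univ.filter
        (fun F : Finset (Sym2 (Fin t)) => F.Nonempty ∧ (∀ e ∈ F, ¬ e.IsDiag) ∧
          ∃ e₁ ∈ F, ∃ e₂ ∈ F, e₁ ≠ e₂ ∧ ∃ v, v ∈ e₁ ∧ v ∈ e₂)) ⊆
      E.powerset.filter (fun F => 2 ≤ F.card) := by
    intro F hF
    simp only [Finset.mem_filter, Finset.mem_univ, true_and] at hF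
    obtain ⟨-, hdiag, hnm⟩ := hF
    refine Finset.mem_filter.mpr ⟨Finset.mem_powerset.mpr ?_, (key F hnm).2⟩
    intro e he
    exact Finset.mem_filter.mpr ⟨Finset.mem_univ _, hdiag e he⟩
  calc ∑ F ∈ Finset.univ.filter
        (fun F : Finset (Sym2 (Fin t)) => F.Nonempty ∧ (∀ e ∈ F, ¬ e.IsDiag) ∧
          ∃ e₁ ∈ F, ∃ e₂ ∈ F, e₁ ≠ e₂ ∧ ∃ v, v ∈ e₁ ∧ v ∈ e₂),
        x ^ F.card * y ^ (Finset.univ.filter (fun v : Fin t => ∃ e ∈ F, v ∈ e)).card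
      ≤ ∑ F ∈ Finset.univ.filter
        (fun F : Finset (Sym2 (Fin t)) => F.Nonempty ∧ (∀ e ∈ F, ¬ e.IsDiag) ∧
          ∃ e₁ ∈ F, ∃ e₂ ∈ F, e₁ ≠ e₂ ∧ ∃ v, v ∈ e₁ ∧ v ∈ e₂),
        x ^ F.card * y ^ (2 * F.card - 1) := by
        refine Finset.sum_le_sum fun F hF => ?_
        simp only [Finset.mem_filter, Finset.mem_univ, true_and] at hF
        exact mul_le_mul_of_nonneg_left
          (pow_le_pow_right₀ hy (key F hF.2.2).1) (le_of_lt (pow_pos hx _))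
    _ ≤ ∑ F ∈ E.powerset.filter (fun F => 2 ≤ F.card),
        x ^ F.card * y ^ (2 * F.card - 1) := by
        refine Finset.sum_le_sum_of_subset_of_nonneg hAS fun F _ _ => ?_
        positivity
    _ = ∑ k ∈ Finset.range (N + 1),
        N.choose k • (if 2 ≤ k then x ^ k * y ^ (2 * k - 1) else 0) := by
        rw [Finset.sum_filter, Finset.sum_powerset_apply_card
          (fun k => if 2 ≤ k then x ^ k * y ^ (2 * k - 1) else 0)]
    _ ≤ ∑ k ∈ Finset.range (N + 1), (t:ℝ) ^ 4 * x ^ 2 * y ^ 3 * (1/2) ^ k := by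
        refine Finset.sum_le_sum fun k _ => ?_
        rcases lt_or_ge k 2 with hk | hk
        · rw [if_neg (by omega), smul_zero]
          positivity
        · obtain ⟨j, rfl⟩ : ∃ j, k = j + 2 := ⟨k - 2, by omega⟩
          rw [if_pos hk, nsmul_eq_mul]
          have hC : ((N.choose (j + 2) : ℕ) : ℝ) ≤ ((N : ℝ)) ^ (j + 2) := by
            exact_mod_cast Nat.choose_le_pow N (j + 2)
          have hexp : 2 * (j + 2) - 1 = 2 * j + 3 := by omega
          rw [hexp]
          have hNk : (0:ℝ) ≤ x ^ (j + 2) * y ^ (2 * j + 3) := by positivity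
          calc (N.choose (j + 2) : ℝ) * (x ^ (j + 2) * y ^ (2 * j + 3))
              ≤ (N : ℝ) ^ (j + 2) * (x ^ (j + 2) * y ^ (2 * j + 3)) :=
                mul_le_mul_of_nonneg_right hC hNk
            _ = ((N : ℝ) ^ 2 * x ^ 2 * y ^ 3) * r ^ j := by
                rw [hrdef]; ring
            _ ≤ ((t:ℝ) ^ 4 / 4 * x ^ 2 * y ^ 3) * (1/2) ^ j := by
                refine mul_le_mul ?_ (pow_le_pow_left₀ hr0 hrhalf j) (by positivity)
                  (by positivity)
                have hN2 : (N : ℝ) ^ 2 ≤ (t:ℝ) ^ 4 / 4 := by nlinarith [Nat.cast_nonneg (α := ℝ) N]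
                have h := mul_le_mul_of_nonneg_right hN2
                  (show (0:ℝ) ≤ x ^ 2 * y ^ 3 by positivity)
                nlinarith [h]
            _ = (t:ℝ) ^ 4 * x ^ 2 * y ^ 3 * (1/2) ^ (j + 2) := by
                rw [pow_add]; ring
    _ = (t:ℝ) ^ 4 * x ^ 2 * y ^ 3 * ∑ k ∈ Finset.range (N + 1), (1/2:ℝ) ^ k := by
        rw [Finset.mul_sum]
    _ ≤ (t:ℝ) ^ 4 * x ^ 2 * y ^ 3 * 2 :=
        mul_le_mul_of_nonneg_left (sum_geometric_two_le _) hty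
    _ ≤ 2 * (t : ℝ) ^ 4 * x ^ 2 * y ^ 3 * Real.exp ((t : ℝ) ^ 2 * x * y ^ 2 / 2) := by
        have hexp1 : 1 ≤ Real.exp ((t : ℝ) ^ 2 * x * y ^ 2 / 2) :=
          Real.one_le_exp (by positivity)
        nlinarith [pow_pos hx 2, pow_pos hy0 3, pow_pos (show (0:ℝ) < t by exact_mod_cast ht) 4]
end

section
/- Let t, Δ be positive integers and x, y positive reals with tΔxy² ≤ 1/2 and x ≤ 1 ≤ y. Then ∑ over nonempty H ⊆ [t] × [Δ] of x^{|H|} y^{u_H + ℓ_H}, where u_H and ℓ_H are the sizes of the projections of H to [t] and [Δ] respectively, is at most K · tΔxy² for an absolute constant K (e.g. the sum is at most 4 tΔxy² under the stated hypotheses; in particular it is (1+o(1)) tΔxy² as tΔxy² → 0). -/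
lemma pow_bound_aux (z : ℝ) (hz : 0 ≤ z) :
    ∀ N : ℕ, (N : ℝ) * z ≤ 1/2 → (1 + z)^N ≤ 1 + 2 * N * z := by
  intro N
  induction N with
  | zero => intro _; simp
  | succ n ih =>
    intro h
    have hn : (n : ℝ) * z ≤ 1/2 := by
      have : (n : ℝ) ≤ (n + 1 : ℕ) := by push_cast; linarith
      nlinarith
    have ihn := ih hn
    have h1z : (0:ℝ) ≤ 1 + z := by linarith
    calc (1 + z)^(n+1) = (1 + z)^n * (1 + z) := by ring
    _ ≤ (1 + 2 * n * z) * (1 + z) := by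
        apply mul_le_mul_of_nonneg_right ihn h1z
    _ = 1 + (2*n + 1) * z + 2 * ((n:ℝ)*z) * z := by ring
    _ ≤ 1 + 2 * (n+1 : ℕ) * z := by push_cast; nlinarith

/-- Grid functional bound: for `t, Δ ≥ 1`, `0 < x ≤ 1 ≤ y` and `tΔxy² ≤ 1/2`,
`∑_{∅ ≠ H ⊆ [t]×[Δ]} x^{|H|} y^{u_H + ℓ_H} ≤ 4 tΔxy²`, where `u_H, ℓ_H` are the
sizes of the two projections of `H`. -/
theorem stmt_19 (t Δ : ℕ) (ht : 0 < t) (hΔ : 0 < Δ) (x y : ℝ)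
    (hx0 : 0 < x) (hx1 : x ≤ 1) (hy : 1 ≤ y)
    (hxy : (t : ℝ) * (Δ : ℝ) * x * y ^ 2 ≤ 1 / 2) :
    ∑ H ∈ Finset.univ.filter (fun H : Finset (Fin t × Fin Δ) => H.Nonempty),
        x ^ H.card * y ^ ((H.image Prod.fst).card + (H.image Prod.snd).card)
      ≤ 4 * (t : ℝ) * (Δ : ℝ) * x * y ^ 2 := by
  set z : ℝ := x * y^2 with hzdef
  have hz0 : 0 ≤ z := by positivity
  have hN : ((t * Δ : ℕ) : ℝ) * z ≤ 1/2 := by push_cast; rw [hzdef]; nlinarith [hxy]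
  -- Step 1: bound each term by z^|H|
  have step1 : ∑ H ∈ Finset.univ.filter (fun H : Finset (Fin t × Fin Δ) => H.Nonempty),
        x ^ H.card * y ^ ((H.image Prod.fst).card + (H.image Prod.snd).card)
      ≤ ∑ H ∈ Finset.univ.filter (fun H : Finset (Fin t × Fin Δ) => H.Nonempty),
        z ^ H.card := by
    apply Finset.sum_le_sum
    intro H _
    have hcard : (H.image Prod.fst).card + (H.image Prod.snd).card ≤ 2 * H.card := by
      have h1 := Finset.card_image_le (s := H) (f := Prod.fst)
      have h2 := Finset.card_image_le (s := H) (f := Prod.snd)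
      omega
    have : y ^ ((H.image Prod.fst).card + (H.image Prod.snd).card) ≤ y ^ (2 * H.card) :=
      pow_le_pow_right₀ hy hcard
    calc x ^ H.card * y ^ ((H.image Prod.fst).card + (H.image Prod.snd).card)
        ≤ x ^ H.card * y ^ (2 * H.card) := by
          apply mul_le_mul_of_nonneg_left this (by positivity)
      _ = z ^ H.card := by rw [hzdef, mul_pow, pow_mul]
  -- Step 2: sum over nonempty subsets equals full sum minus 1
  have hsplit : ∑ H ∈ (Finset.univ : Finset (Finset (Fin t × Fin Δ))), z ^ H.card
      = (∑ H ∈ Finset.univ.filter (fun H : Finset (Fin t × Fin Δ) => H.Nonempty),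
          z ^ H.card) + 1 := by
    rw [← Finset.sum_filter_add_sum_filter_not Finset.univ
      (fun H : Finset (Fin t × Fin Δ) => H.Nonempty) (fun H => z ^ H.card)]
    congr 1
    have : Finset.univ.filter (fun H : Finset (Fin t × Fin Δ) => ¬ H.Nonempty) = {∅} := by
      ext H
      simp [Finset.not_nonempty_iff_eq_empty]
    rw [this]
    simp
  -- Step 3: full sum is (1+z)^(t*Δ)
  have step3 : ∑ H ∈ (Finset.univ : Finset (Finset (Fin t × Fin Δ))), z ^ H.card
      = (1 + z) ^ (t * Δ) := by
    rw [← Finset.powerset_univ, Finset.sum_powerset_apply_card]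
    have hcard : (Finset.univ : Finset (Fin t × Fin Δ)).card = t * Δ := by
      simp
    rw [hcard, add_comm (1:ℝ) z, add_pow]
    apply Finset.sum_congr rfl
    intro k _
    simp [mul_comm]
  have key : (1 + z) ^ (t * Δ) ≤ 1 + 2 * ((t*Δ : ℕ) : ℝ) * z :=
    pow_bound_aux z hz0 (t*Δ) hN
  have : (∑ H ∈ Finset.univ.filter (fun H : Finset (Fin t × Fin Δ) => H.Nonempty),
      z ^ H.card) ≤ 2 * ((t*Δ : ℕ) : ℝ) * z := by
    have := hsplit ▸ step3
    linarith [step3, hsplit, key]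
  calc _ ≤ _ := step1
    _ ≤ 2 * ((t*Δ : ℕ) : ℝ) * z := this
    _ ≤ 4 * (t : ℝ) * (Δ : ℝ) * x * y ^ 2 := by
        push_cast
        rw [hzdef]
        nlinarith [mul_nonneg (mul_nonneg (mul_nonneg (Nat.cast_nonneg (α := ℝ) t)
          (Nat.cast_nonneg (α := ℝ) Δ)) hx0.le) (sq_nonneg y)]
end
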